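/- arXiv:1902.08421 — 10 statements merged into one kernel-verified Lean document; each statement's English description precedes it below -/
import Mathlib

section
/- For every integer n with n ≥ 0, in the transition system R1 the term sum1 n reduces in finitely many steps to ret ((n*(n+1))/2); that is, Relation.ReflTransGen step1 (sum1 n) (ret ((n*(n+1))/2)) holds (here n*(n+1) is even, so the integer division is exact). Moreover ret ((n*(n+1))/2) is a normal form: there is no t with step1 (ret ((n*(n+1))/2)) t. -/
inductive Term1 : Type
  | sum1 : ℤ → Term1
  | u1 : ℤ → ℤ → ℤ → Term1
  | ret : ℤ → Term1

open Term1

inductive step1 : Term1 → Term1 → Prop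
  | init (x : ℤ) : step1 (sum1 x) (u1 x 0 0)
  | loop (x i z : ℤ) : i < x → step1 (u1 x i z) (u1 x (i+1) (z+i+1))
  | exit (x i z : ℤ) : ¬ i < x → step1 (u1 x i z) (ret z)

lemma aux (n : ℤ) : ∀ (k : ℕ) (i : ℤ), i + k = n →
    Relation.ReflTransGen step1 (u1 n i (i*(i+1)/2)) (ret ((n*(n+1))/2)) := by
  intro k
  induction k with
  | zero =>
    intro i hi
    simp at hi
    subst hi
    exact Relation.ReflTransGen.single (step1.exit _ _ _ (lt_irrefl _))
  | succ k ih =>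
    intro i hi
    have hlt : i < n := by omega
    have hstep := step1.loop n i (i*(i+1)/2) hlt
    have hz : i*(i+1)/2 + i + 1 = (i+1)*(i+1+1)/2 := by
      have h2 : (2:ℤ) ∣ i*(i+1) := (Int.even_mul_succ_self i).two_dvd
      have h4 : (i+1)*(i+1+1) = i*(i+1) + 2*(i+1) := by ring
      omega
    rw [hz] at hstep
    exact Relation.ReflTransGen.head hstep (ih (i+1) (by omega))

theorem stmt_0 (n : ℤ) (hn : n ≥ 0) :
    Relation.ReflTransGen step1 (sum1 n) (ret ((n*(n+1))/2)) ∧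
    ¬ ∃ t, step1 (ret ((n*(n+1))/2)) t := by
  constructor
  · have := aux n n.toNat 0 (by omega)
    norm_num at this
    exact Relation.ReflTransGen.head (step1.init n) this
  · rintro ⟨t, ht⟩
    cases ht
end

section
/- In the transition system R2, for all integers n, c with n ≥ 0, the term sum1 n c reduces to ret ((n*(n+1))/2) (c+1); that is, Relation.ReflTransGen step2 (sum1 n c) (ret ((n*(n+1))/2) (c+1)) holds (n*(n+1) is even, so the integer division is exact). In words: each call of sum1 returns the sum 0+1+...+n and increments the global call counter num exactly once. -/
inductive Term2 : Type
  | sum1 : ℤ → ℤ → Term2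
  | u1 : ℤ → ℤ → ℤ → ℤ → Term2
  | ret : ℤ → ℤ → Term2
  | g : ℤ → ℤ → Term2
  | u2 : ℤ → ℤ → ℤ → Term2
  | u2' : ℤ → ℤ → ℤ → Term2
  | u4 : ℤ → ℤ → ℤ → Term2
  | u3 : ℤ → ℤ → ℤ → Term2 → Term2

open Term2

inductive step2 : Term2 → Term2 → Prop
  | sum1_init (x num : ℤ) : step2 (sum1 x num) (u1 x 0 0 (num+1))
  | u1_loop (x i z num : ℤ) : i < x → step2 (u1 x i z num) (u1 x (i+1) (z+i+1) num)
  | u1_exit (x i z num : ℤ) : ¬ i < x → step2 (u1 x i z num) (ret z num)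
  | g_init (x num : ℤ) : step2 (g x num) (u2 x num 0)
  | u2_step (x num z : ℤ) : step2 (u2 x num z) (u2' x (num+1) z)
  | u2'_step (x num z : ℤ) : step2 (u2' x num z) (u3 x num z (sum1 x num))
  | u3_ret (x numOld z y numNew : ℤ) : step2 (u3 x numOld z (ret y numNew)) (u4 x numNew y)
  | u4_step (x num z : ℤ) : step2 (u4 x num z) (ret (x*z) num)
  | u3_cong (x num z : ℤ) {t t' : Term2} : step2 t t' → step2 (u3 x num z t) (u3 x num z t')

lemma u1_to_ret : ∀ (k : ℕ) (x i z num r : ℤ), x = i + k →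
    2*r = 2*z + x*(x+1) - i*(i+1) →
    Relation.ReflTransGen step2 (u1 x i z num) (ret r num) := by
  intro k
  induction k with
  | zero =>
    intro x i z num r hx hr
    have hx' : x = i := by omega
    subst hx'
    have hz : r = z := by linarith
    rw [hz]
    exact Relation.ReflTransGen.single (step2.u1_exit _ _ _ _ (by omega))
  | succ k ih =>
    intro x i z num r hx hr
    have hlt : i < x := by omega
    refine Relation.ReflTransGen.head (step2.u1_loop x i z num hlt) ?_
    refine ih x (i+1) (z+i+1) num r (by omega) ?_
    have : (i+1)*(i+1+1) = i*(i+1) + 2*(i+1) := by ring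
    linarith

theorem stmt_3 (n c : ℤ) (hn : n ≥ 0) :
    Relation.ReflTransGen step2 (sum1 n c) (ret ((n*(n+1))/2) (c+1)) := by
  refine Relation.ReflTransGen.head (step2.sum1_init n c) ?_
  have hdvd : (2:ℤ) ∣ n*(n+1) := (Int.even_mul_succ_self n).two_dvd
  refine u1_to_ret n.toNat n 0 0 (c+1) _ (by omega) ?_
  rw [Int.mul_ediv_cancel' hdvd]
  ring
end

section
/- In the transition system R2, for all integers n, c with n ≥ 0, the term g n c reduces to ret (n * ((n*(n+1))/2)) (c+2); that is, Relation.ReflTransGen step2 (g n c) (ret (n * ((n*(n+1))/2)) (c+2)) holds. In words: g(n) returns n times the sum 0+1+...+n and increments the global call counter num exactly twice (once in g and once in the call of sum1). -/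
open Term2

/-
The loop of `sum1 x` started at counter `i` with accumulator `z` adds `i+1, …, x`
to `z`, i.e. it returns `z + (x(x+1) - i(i+1))/2`; this is proved by downward induction on `i`.
Starting at `i = z = 0` gives `x(x+1)/2`, with the counter incremented once. The body of `g`
increments the counter once more, runs `sum1` in the context `u3` and multiplies the result by `x`.
-/

open Relation

namespace Term2

theorem reflTransGen_u3 (x num z : ℤ) {t t' : Term2} (h : ReflTransGen step2 t t') :
    ReflTransGen step2 (u3 x num z t) (u3 x num z t') :=
  h.lift (u3 x num z) fun _ _ => step2.u3_cong x num z

theorem u1_reduces (x num : ℤ) {i : ℤ} (hi : i ≤ x) (z : ℤ) :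
    ReflTransGen step2 (u1 x i z num) (ret (z + (x * (x + 1) - i * (i + 1)) / 2) num) := by
  induction i, hi using Int.leInductionDown generalizing z with
  | base => simpa using ReflTransGen.single (step2.u1_exit x x z num (lt_irrefl x))
  | pred i hi ih =>
    have hloop : step2 (u1 x (i - 1) z num) (u1 x i (z + i) num) := by
      convert step2.u1_loop x (i - 1) z num (by omega) using 2 <;> ring
    have hval : z + i + (x * (x + 1) - i * (i + 1)) / 2
        = z + (x * (x + 1) - (i - 1) * (i - 1 + 1)) / 2 := by
      have : (i - 1) * (i - 1 + 1) = i * (i + 1) - 2 * i := by ring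
      omega
    simpa only [hval] using ReflTransGen.head hloop (ih (z + i))

theorem sum1_reduces {x : ℤ} (hx : 0 ≤ x) (num : ℤ) :
    ReflTransGen step2 (sum1 x num) (ret (x * (x + 1) / 2) (num + 1)) := by
  simpa using ReflTransGen.head (step2.sum1_init x num) (u1_reduces x (num + 1) hx 0)

theorem g_reduces_of_sum1_reduces {x num y num' : ℤ}
    (h : ReflTransGen step2 (sum1 x (num + 1)) (ret y num')) :
    ReflTransGen step2 (g x num) (ret (x * y) num') :=
  .head (step2.g_init x num) <| .head (step2.u2_step x num 0) <|
    .head (step2.u2'_step x (num + 1) 0) <| (reflTransGen_u3 x (num + 1) 0 h).trans <|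
    .head (step2.u3_ret x (num + 1) 0 y num') <| .single (step2.u4_step x num' y)

end Term2

theorem stmt_4 (n c : ℤ) (hn : n ≥ 0) :
    Relation.ReflTransGen step2 (g n c) (ret (n * ((n*(n+1))/2)) (c+2)) := by
  apply g_reduces_of_sum1_reduces
  simpa only [add_assoc, one_add_one_eq_two] using sum1_reduces hn (c + 1)
end

section
/- In the factorial rewrite system, for every natural number n, the term fact (val n) reduces to the value of n factorial: Relation.ReflTransGen stepF (fact (val (n : ℤ))) (val (n.factorial : ℤ)) holds. -/
inductive TermF : Type
  | val : ℤ → TermF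
  | fact : TermF → TermF
  | mul : TermF → TermF → TermF
  | sub : TermF → TermF → TermF

open TermF

inductive stepF : TermF → TermF → Prop
  | fact_base (n : ℤ) : n ≤ 0 → stepF (fact (val n)) (val 1)
  | fact_step (n : ℤ) : ¬ n ≤ 0 → stepF (fact (val n)) (mul (val n) (fact (sub (val n) (val 1))))
  | calc_sub (m n : ℤ) : stepF (sub (val m) (val n)) (val (m - n))
  | calc_mul (m n : ℤ) : stepF (mul (val m) (val n)) (val (m * n))
  | fact_cong {t t' : TermF} : stepF t t' → stepF (fact t) (fact t')
  | mul_cong_left {t t' : TermF} (u : TermF) : stepF t t' → stepF (mul t u) (mul t' u)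
  | mul_cong_right {t t' : TermF} (u : TermF) : stepF t t' → stepF (mul u t) (mul u t')
  | sub_cong_left {t t' : TermF} (u : TermF) : stepF t t' → stepF (sub t u) (sub t' u)
  | sub_cong_right {t t' : TermF} (u : TermF) : stepF t t' → stepF (sub u t) (sub u t')

lemma rtg_mul_right (u : TermF) {t t' : TermF}
    (h : Relation.ReflTransGen stepF t t') :
    Relation.ReflTransGen stepF (mul u t) (mul u t') := by
  induction h with
  | refl => exact .refl
  | tail _ s ih => exact ih.tail (stepF.mul_cong_right u s)

lemma rtg_fact {t t' : TermF} (h : Relation.ReflTransGen stepF t t') :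
    Relation.ReflTransGen stepF (fact t) (fact t') := by
  induction h with
  | refl => exact .refl
  | tail _ s ih => exact ih.tail (stepF.fact_cong s)

theorem stmt_6 (n : ℕ) :
    Relation.ReflTransGen stepF (fact (val (n : ℤ))) (val (n.factorial : ℤ)) := by
  induction n with
  | zero => exact Relation.ReflTransGen.single (stepF.fact_base 0 le_rfl)
  | succ n ih =>
    have hpos : ¬ ((n + 1 : ℕ) : ℤ) ≤ 0 := by push_cast; omega
    refine Relation.ReflTransGen.head (stepF.fact_step _ hpos) ?_
    refine Relation.ReflTransGen.trans
      (rtg_mul_right _ (rtg_fact (Relation.ReflTransGen.single (stepF.calc_sub _ _)))) ?_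
    have : ((n + 1 : ℕ) : ℤ) - 1 = (n : ℤ) := by push_cast; ring
    rw [this]
    refine Relation.ReflTransGen.trans (rtg_mul_right _ ih) ?_
    have : ((n + 1).factorial : ℤ) = ((n + 1 : ℕ) : ℤ) * (n.factorial : ℤ) := by
      push_cast [Nat.factorial_succ]; ring
    rw [this]
    exact Relation.ReflTransGen.single (stepF.calc_mul _ _)
end

section
/- In the factorial rewrite system, every reduction sequence starting from fact (val n) is finite, for every integer n: there is no function f : ℕ → TermF with f 0 = fact (val n) and stepF (f k) (f (k+1)) for all k. -/
open TermF

/-- Value interpretation, invariant under reduction. -/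
def vF : TermF → ℤ
  | val m => m
  | fact t => Nat.factorial (vF t).toNat
  | mul a b => vF a * vF b
  | sub a b => vF a - vF b

/-- Measure that strictly decreases with each step. -/
def muF : TermF → ℕ
  | val _ => 0
  | fact t => muF t + 3 * (vF t).toNat + 2
  | mul a b => muF a + muF b + 1
  | sub a b => muF a + muF b + 1

lemma step_dec {t t' : TermF} (h : stepF t t') : vF t' = vF t ∧ muF t' < muF t := by
  induction h with
  | fact_base n hn =>
      constructor
      · simp [vF, Int.toNat_of_nonpos hn]
      · simp [muF]
  | fact_step n hn =>
      push_neg at hn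
      have h1 : (1:ℤ) ≤ n := hn
      have htn : 1 ≤ n.toNat := by omega
      have hsub : (n - 1).toNat = n.toNat - 1 := by omega
      constructor
      · show n * Nat.factorial (n - 1).toNat = Nat.factorial n.toNat
        rw [hsub]
        have : Nat.factorial n.toNat = n.toNat * Nat.factorial (n.toNat - 1) := by
          conv_lhs => rw [show n.toNat = (n.toNat - 1) + 1 by omega]
          rw [Nat.factorial_succ]
          congr 1
          omega
        rw [this]
        push_cast
        rw [Int.toNat_of_nonneg (by omega)]
      · simp only [muF, vF, hsub]
        omega
  | calc_sub m k =>
      constructor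
      · simp [vF]
      · simp [muF]
  | calc_mul m k =>
      constructor
      · simp [vF]
      · simp [muF]
  | fact_cong h ih =>
      simp only [vF, muF, ih.1]
      exact ⟨trivial, by omega⟩
  | mul_cong_left u h ih =>
      simp only [vF, muF, ih.1]
      exact ⟨trivial, by omega⟩
  | mul_cong_right u h ih =>
      simp only [vF, muF, ih.1]
      exact ⟨trivial, by omega⟩
  | sub_cong_left u h ih =>
      simp only [vF, muF, ih.1]
      exact ⟨trivial, by omega⟩
  | sub_cong_right u h ih =>
      simp only [vF, muF, ih.1]
      exact ⟨trivial, by omega⟩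

theorem stmt_7 (n : ℤ) :
    ¬ ∃ f : ℕ → TermF, f 0 = fact (val n) ∧ ∀ k, stepF (f k) (f (k+1)) := by
  rintro ⟨f, -, hstep⟩
  have : ∀ k, muF (f (k+1)) < muF (f k) := fun k => (step_dec (hstep k)).2
  have hb : ∀ k, muF (f k) + k ≤ muF (f 0) := by
    intro k
    induction k with
    | zero => omega
    | succ m ih => have := this m; omega
  have := hb (muF (f 0) + 1)
  omega
end

section
/- In the transition system R3, for all integers n, c with n ≥ 0, the term sum n c reduces to ret ((n*(n+1))/2) (c + n + 1); that is, Relation.ReflTransGen step3 (sum n c) (ret ((n*(n+1))/2) (c+n+1)) holds. In words: the recursive function sum called on n with global counter num initially c returns 0+1+...+n, and num ends at c+n+1. -/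
inductive Term3 : Type
  | sum : ℤ → ℤ → Term3
  | u1 : ℤ → ℤ → ℤ → Term3
  | u2 : ℤ → ℤ → ℤ → Term3
  | u3 : ℤ → ℤ → ℤ → Term3
  | u4 : ℤ → ℤ → ℤ → Term3
  | u5 : ℤ → ℤ → ℤ → Term3
  | u7 : ℤ → ℤ → ℤ → Term3
  | u8 : ℤ → ℤ → ℤ → Term3
  | u9 : ℤ → ℤ → ℤ → Term3
  | u6 : ℤ → ℤ → ℤ → Term3 → Term3
  | ret : ℤ → ℤ → Term3
  | main : ℤ → Term3
  | u10 : ℤ → ℤ → Term3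
  | u11 : ℤ → ℤ → Term3 → Term3
  | u12 : ℤ → ℤ → Term3

open Term3

inductive step3 : Term3 → Term3 → Prop
  | sum_init (x num : ℤ) : step3 (sum x num) (u1 x num 0)
  | u1_step (x num z : ℤ) : step3 (u1 x num z) (u2 x (num+1) z)
  | u2_then (x num z : ℤ) : x ≤ 0 → step3 (u2 x num z) (u3 x num z)
  | u2_else (x num z : ℤ) : ¬ x ≤ 0 → step3 (u2 x num z) (u5 x num z)
  | u3_step (x num z : ℤ) : step3 (u3 x num z) (u4 x num 0)
  | u4_step (x num z : ℤ) : step3 (u4 x num z) (u9 x num z)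
  | u5_step (x num z : ℤ) : step3 (u5 x num z) (u6 x num z (sum (x-1) num))
  | u6_ret (x numOld z y numNew : ℤ) : step3 (u6 x numOld z (ret y numNew)) (u7 x numNew y)
  | u7_step (x num z : ℤ) : step3 (u7 x num z) (u8 x num (x+z))
  | u8_step (x num z : ℤ) : step3 (u8 x num z) (u9 x num z)
  | u9_step (x num z : ℤ) : step3 (u9 x num z) (ret z num)
  | main_step (num : ℤ) : step3 (main num) (u10 num 3)
  | u10_step (num z : ℤ) : step3 (u10 num z) (u11 num z (sum z num))
  | u11_ret (numOld z y numNew : ℤ) : step3 (u11 numOld z (ret y numNew)) (u12 y numNew)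
  | u12_step (z num : ℤ) : step3 (u12 z num) (ret 0 num)
  | u6_cong (x num z : ℤ) {t t' : Term3} : step3 t t' → step3 (u6 x num z t) (u6 x num z t')
  | u11_cong (num z : ℤ) {t t' : Term3} : step3 t t' → step3 (u11 num z t) (u11 num z t')

/-!
Induction on `n`, generalising the counter: `sum (n+1) c` increments the counter and calls
`sum n (c+1)` inside the context `u6`, where the inductive hypothesis applies by congruence;
the returned value `n*(n+1)/2` is then increased by `n+1`.
-/

theorem step3_rtc_u6 {x num z : ℤ} {t t' : Term3} (h : Relation.ReflTransGen step3 t t') :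
    Relation.ReflTransGen step3 (u6 x num z t) (u6 x num z t') :=
  Relation.ReflTransGen.lift (u6 x num z) (fun _ _ => step3.u6_cong x num z) _ _ h

theorem step3_rtc_sum_zero (c : ℤ) : Relation.ReflTransGen step3 (sum 0 c) (ret 0 (c + 1)) :=
  .head (.sum_init 0 c) <| .head (.u1_step 0 c 0) <| .head (.u2_then 0 (c + 1) 0 le_rfl) <|
    .head (.u3_step 0 (c + 1) 0) <| .head (.u4_step 0 (c + 1) 0) <| .single (.u9_step 0 (c + 1) 0)

theorem step3_rtc_sum_of_pos {x : ℤ} (hx : 0 < x) (c : ℤ) :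
    Relation.ReflTransGen step3 (sum x c) (u6 x (c + 1) 0 (sum (x - 1) (c + 1))) :=
  .head (.sum_init x c) <| .head (.u1_step x c 0) <| .head (.u2_else x (c + 1) 0 hx.not_ge) <|
    .single (.u5_step x (c + 1) 0)

theorem step3_rtc_u6_ret (x num z y num' : ℤ) :
    Relation.ReflTransGen step3 (u6 x num z (ret y num')) (ret (x + y) num') :=
  .head (.u6_ret x num z y num') <| .head (.u7_step x num' y) <| .head (.u8_step x num' (x + y)) <|
    .single (.u9_step x num' (x + y))

theorem add_one_add_mul_add_one_ediv_two (n : ℤ) :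
    n + 1 + n * (n + 1) / 2 = (n + 1) * (n + 1 + 1) / 2 := by
  rw [show (n + 1) * (n + 1 + 1) = n * (n + 1) + (n + 1) * 2 by ring,
    Int.add_mul_ediv_right _ _ two_ne_zero, add_comm]

theorem stmt_9 (n c : ℤ) (hn : n ≥ 0) :
    Relation.ReflTransGen step3 (sum n c) (ret ((n*(n+1))/2) (c+n+1)) := by
  induction n, hn using Int.leInduction generalizing c with
  | base => simpa using step3_rtc_sum_zero c
  | succ n hn ih =>
    have hcall := step3_rtc_sum_of_pos (by omega : 0 < n + 1) c
    rw [add_sub_cancel_right] at hcall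
    have hret := step3_rtc_u6_ret (n + 1) (c + 1) 0 (n * (n + 1) / 2) (c + 1 + n + 1)
    rw [add_one_add_mul_add_one_ediv_two] at hret
    rw [show c + (n + 1) + 1 = c + 1 + n + 1 by ring]
    exact hcall.trans ((step3_rtc_u6 (ih (c + 1))).trans hret)
end

section
/- In the stack-based transition system R4, for all integers n, c with n ≥ 0 and every stack p : Proc, the term env c (stack (sumS n) p) reduces to env (c+n+1) (stack (retS ((n*(n+1))/2)) p); that is, Relation.ReflTransGen step4 (env c (stack (sumS n) p)) (env (c+n+1) (stack (retS ((n*(n+1))/2)) p)) holds. In words: executing a call of sum(n) on top of an arbitrary stack p returns 0+1+...+n, increments the global variable num by n+1, and leaves the rest of the stack p unchanged. -/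
inductive State : Type
  | mainS : State
  | sumS : ℤ → State
  | u1 : ℤ → ℤ → State
  | u2 : ℤ → ℤ → State
  | u3 : ℤ → ℤ → State
  | u4 : ℤ → ℤ → State
  | u5 : ℤ → ℤ → State
  | u6 : ℤ → ℤ → State
  | u7 : ℤ → ℤ → State
  | u8 : ℤ → ℤ → State
  | u9 : ℤ → ℤ → State
  | retS : ℤ → State
  | u10 : ℤ → State
  | u11 : ℤ → State
  | u12 : ℤ → State

inductive Proc : Type
  | bot : Proc
  | stack : State → Proc → Proc

inductive Env : Type
  | env : ℤ → Proc → Env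

open State Proc Env

inductive L : State → State → Prop
  | sum_init (x : ℤ) : L (sumS x) (u1 x 0)
  | u2_then (x z : ℤ) : x ≤ 0 → L (u2 x z) (u3 x z)
  | u2_else (x z : ℤ) : ¬ x ≤ 0 → L (u2 x z) (u5 x z)
  | u3_step (x z : ℤ) : L (u3 x z) (u4 x 0)
  | u4_step (x z : ℤ) : L (u4 x z) (u9 x z)
  | u7_step (x z : ℤ) : L (u7 x z) (u8 x (x+z))
  | u8_step (x z : ℤ) : L (u8 x z) (u9 x z)
  | u9_step (x z : ℤ) : L (u9 x z) (retS z)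
  | main_step : L mainS (u10 3)
  | u12_step (z : ℤ) : L (u12 z) (retS 0)

inductive step4 : Env → Env → Prop
  | lift (num : ℤ) {s s' : State} (p : Proc) :
      L s s' → step4 (env num (stack s p)) (env num (stack s' p))
  | incr (num x z : ℤ) (p : Proc) :
      step4 (env num (stack (u1 x z) p)) (env (num+1) (stack (u2 x z) p))
  | push (num x z : ℤ) (p : Proc) :
      step4 (env num (stack (u5 x z) p)) (env num (stack (sumS (x-1)) (stack (u6 x z) p)))
  | pop (num y x z : ℤ) (p : Proc) :
      step4 (env num (stack (retS y) (stack (u6 x z) p))) (env num (stack (u7 x y) p))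
  | push_main (num z : ℤ) (p : Proc) :
      step4 (env num (stack (u10 z) p)) (env num (stack (sumS z) (stack (u11 z) p)))
  | pop_main (num y z : ℤ) (p : Proc) :
      step4 (env num (stack (retS y) (stack (u11 z) p))) (env num (stack (u12 y) p))

/-!
Induction on `n`. For `n + 1 > 0` the call increments `num`, pushes the frame `u6 (n+1) 0` and
calls `sum n`, which by induction returns `n(n+1)/2` after `n + 1` further increments; popping
the frame then adds `n + 1`, and `(n+1) + n(n+1)/2 = (n+1)(n+2)/2`.
-/

open Relation

local infix:50 " ⇒* " => ReflTransGen step4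

section Reductions

variable {num : ℤ} {p : Proc}

theorem sumS_reduces_zero :
    env num (stack (sumS 0) p) ⇒* env (num+1) (stack (retS 0) p) :=
  .head (.lift _ _ (.sum_init 0)) <| .head (.incr _ 0 0 _) <|
    .head (.lift _ _ (.u2_then 0 0 le_rfl)) <| .head (.lift _ _ (.u3_step 0 0)) <|
    .head (.lift _ _ (.u4_step 0 0)) <| .single (.lift _ _ (.u9_step 0 0))

theorem sumS_reduces_call {x : ℤ} (hx : 0 < x) :
    env num (stack (sumS x) p) ⇒* env (num+1) (stack (sumS (x-1)) (stack (u6 x 0) p)) :=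
  .head (.lift _ _ (.sum_init x)) <| .head (.incr _ x 0 _) <|
    .head (.lift _ _ (.u2_else x 0 (not_le.mpr hx))) <| .single (.push _ x 0 _)

theorem retS_u6_reduces (x y z : ℤ) :
    env num (stack (retS y) (stack (u6 x z) p)) ⇒* env num (stack (retS (x+y)) p) :=
  .head (.pop _ y x z _) <| .head (.lift _ _ (.u7_step x y)) <|
    .head (.lift _ _ (.u8_step x (x+y))) <| .single (.lift _ _ (.u9_step x (x+y)))

end Reductions

theorem add_one_add_triangle (n : ℤ) : (n+1) + n*(n+1)/2 = (n+1)*(n+1+1)/2 := by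
  have h : (n+1)*(n+1+1) = n*(n+1) + 2*(n+1) := by ring
  rw [h, Int.add_mul_ediv_left _ _ two_ne_zero, add_comm]

theorem stmt_12 (n c : ℤ) (hn : n ≥ 0) (p : Proc) :
    Relation.ReflTransGen step4 (env c (stack (sumS n) p))
      (env (c+n+1) (stack (retS ((n*(n+1))/2)) p)) := by
  induction n, hn using Int.leInduction generalizing c p with
  | base => simpa using sumS_reduces_zero
  | succ n hn ih =>
    calc env c (stack (sumS (n+1)) p)
        ⇒* env (c+1) (stack (sumS n) (stack (u6 (n+1) 0) p)) := by
          simpa using sumS_reduces_call (num := c) (p := p) (by omega : 0 < n+1)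
      _ ⇒* env (c+1+n+1) (stack (retS (n*(n+1)/2)) (stack (u6 (n+1) 0) p)) := ih _ _
      _ ⇒* env (c+1+n+1) (stack (retS ((n+1) + n*(n+1)/2)) p) := retS_u6_reduces _ _ _
      _ = env (c+(n+1)+1) (stack (retS ((n+1)*(n+1+1)/2)) p) := by
          rw [add_one_add_triangle, show c+1+n+1 = c+(n+1)+1 by ring]
end

section
/- In the stack-based transition system R4, every reduction sequence starting from env c (stack (sumS n) bot) is finite, for all integers n and c: there is no function f : ℕ → Env with f 0 = env c (stack (sumS n) bot) and step4 (f k) (f (k+1)) for all k. In words: the execution of any call of sum in the call-stack model always halts. -/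
open State Proc Env

def phi : State → ℕ
  | mainS => 1000
  | sumS x => 100 * x.toNat + 8
  | u1 x _ => 100 * x.toNat + 7
  | u2 x _ => 100 * x.toNat + 6
  | u3 _ _ => 3
  | u4 _ _ => 2
  | u5 x _ => if x ≤ 0 then 13 else 100 * x.toNat + 5
  | u6 _ _ => 4
  | u7 _ _ => 3
  | u8 _ _ => 2
  | u9 _ _ => 1
  | retS _ => 0
  | u10 x => 100 * x.toNat + 11
  | u11 _ => 2
  | u12 _ => 1

def phiP : Proc → ℕ
  | bot => 0
  | stack s p => phi s + phiP p

def phiE : Env → ℕ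
  | env _ p => phiP p

lemma L_dec {s s' : State} (h : L s s') : phi s' < phi s := by
  cases h with
  | u2_else x z hx => simp only [phi, if_neg hx]; omega
  | _ => simp only [phi] <;> omega

lemma step_dec_s14 {e e' : Env} (h : step4 e e') : phiE e' < phiE e := by
  cases h with
  | lift num p hL => simpa [phiE, phiP] using L_dec hL
  | push num x z p =>
      simp only [phiE, phiP, phi]
      by_cases hx : x ≤ 0 <;> simp only [if_pos, if_neg, hx, if_true, if_false] <;> omega
  | _ => simp [phiE, phiP, phi] <;> omega

theorem stmt_14 (n c : ℤ) :
    ¬ ∃ f : ℕ → Env, f 0 = env c (stack (sumS n) bot) ∧ ∀ k, step4 (f k) (f (k+1)) := by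
  rintro ⟨f, -, hstep⟩
  have key : ∀ k, phiE (f k) + k ≤ phiE (f 0) := by
    intro k
    induction k with
    | zero => omega
    | succ k ih => have := step_dec_s14 (hstep k); omega
  have := key (phiE (f 0) + 1)
  omega
end

section
/- Equivalence of the nested-call model R3 and the call-stack model R4 on the function sum: for all integers n, c, v, c', the reduction Relation.ReflTransGen step3 (sum n c) (ret v c') holds in R3 if and only if the reduction Relation.ReflTransGen step4 (env c (stack (sumS n) bot)) (env c' (stack (retS v) bot)) holds in R4. In words: a call of sum(n) with global counter c returns value v with final counter c' in the existing transformation exactly when it does so in the new stack-based transformation. -/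
namespace R3

inductive Term3 : Type
  | sum : ℤ → ℤ → Term3
  | u1 : ℤ → ℤ → ℤ → Term3
  | u2 : ℤ → ℤ → ℤ → Term3
  | u3 : ℤ → ℤ → ℤ → Term3
  | u4 : ℤ → ℤ → ℤ → Term3
  | u5 : ℤ → ℤ → ℤ → Term3
  | u7 : ℤ → ℤ → ℤ → Term3
  | u8 : ℤ → ℤ → ℤ → Term3
  | u9 : ℤ → ℤ → ℤ → Term3
  | u6 : ℤ → ℤ → ℤ → Term3 → Term3
  | ret : ℤ → ℤ → Term3
  | main : ℤ → Term3
  | u10 : ℤ → ℤ → Term3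
  | u11 : ℤ → ℤ → Term3 → Term3
  | u12 : ℤ → ℤ → Term3

open Term3

inductive step3 : Term3 → Term3 → Prop
  | sum_init (x num : ℤ) : step3 (sum x num) (u1 x num 0)
  | u1_step (x num z : ℤ) : step3 (u1 x num z) (u2 x (num+1) z)
  | u2_then (x num z : ℤ) : x ≤ 0 → step3 (u2 x num z) (u3 x num z)
  | u2_else (x num z : ℤ) : ¬ x ≤ 0 → step3 (u2 x num z) (u5 x num z)
  | u3_step (x num z : ℤ) : step3 (u3 x num z) (u4 x num 0)
  | u4_step (x num z : ℤ) : step3 (u4 x num z) (u9 x num z)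
  | u5_step (x num z : ℤ) : step3 (u5 x num z) (u6 x num z (sum (x-1) num))
  | u6_ret (x numOld z y numNew : ℤ) : step3 (u6 x numOld z (ret y numNew)) (u7 x numNew y)
  | u7_step (x num z : ℤ) : step3 (u7 x num z) (u8 x num (x+z))
  | u8_step (x num z : ℤ) : step3 (u8 x num z) (u9 x num z)
  | u9_step (x num z : ℤ) : step3 (u9 x num z) (ret z num)
  | main_step (num : ℤ) : step3 (main num) (u10 num 3)
  | u10_step (num z : ℤ) : step3 (u10 num z) (u11 num z (sum z num))
  | u11_ret (numOld z y numNew : ℤ) : step3 (u11 numOld z (ret y numNew)) (u12 y numNew)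
  | u12_step (z num : ℤ) : step3 (u12 z num) (ret 0 num)
  | u6_cong (x num z : ℤ) {t t' : Term3} : step3 t t' → step3 (u6 x num z t) (u6 x num z t')
  | u11_cong (num z : ℤ) {t t' : Term3} : step3 t t' → step3 (u11 num z t) (u11 num z t')
end R3

namespace R4

inductive State : Type
  | mainS : State
  | sumS : ℤ → State
  | u1 : ℤ → ℤ → State
  | u2 : ℤ → ℤ → State
  | u3 : ℤ → ℤ → State
  | u4 : ℤ → ℤ → State
  | u5 : ℤ → ℤ → State
  | u6 : ℤ → ℤ → State
  | u7 : ℤ → ℤ → State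
  | u8 : ℤ → ℤ → State
  | u9 : ℤ → ℤ → State
  | retS : ℤ → State
  | u10 : ℤ → State
  | u11 : ℤ → State
  | u12 : ℤ → State

inductive Proc : Type
  | bot : Proc
  | stack : State → Proc → Proc

inductive Env : Type
  | env : ℤ → Proc → Env

open State Proc Env

inductive L : State → State → Prop
  | sum_init (x : ℤ) : L (sumS x) (u1 x 0)
  | u2_then (x z : ℤ) : x ≤ 0 → L (u2 x z) (u3 x z)
  | u2_else (x z : ℤ) : ¬ x ≤ 0 → L (u2 x z) (u5 x z)
  | u3_step (x z : ℤ) : L (u3 x z) (u4 x 0)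
  | u4_step (x z : ℤ) : L (u4 x z) (u9 x z)
  | u7_step (x z : ℤ) : L (u7 x z) (u8 x (x+z))
  | u8_step (x z : ℤ) : L (u8 x z) (u9 x z)
  | u9_step (x z : ℤ) : L (u9 x z) (retS z)
  | main_step : L mainS (u10 3)
  | u12_step (z : ℤ) : L (u12 z) (retS 0)

inductive step4 : Env → Env → Prop
  | lift (num : ℤ) {s s' : State} (p : Proc) :
      L s s' → step4 (env num (stack s p)) (env num (stack s' p))
  | incr (num x z : ℤ) (p : Proc) :
      step4 (env num (stack (u1 x z) p)) (env (num+1) (stack (u2 x z) p))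
  | push (num x z : ℤ) (p : Proc) :
      step4 (env num (stack (u5 x z) p)) (env num (stack (sumS (x-1)) (stack (u6 x z) p)))
  | pop (num y x z : ℤ) (p : Proc) :
      step4 (env num (stack (retS y) (stack (u6 x z) p))) (env num (stack (u7 x y) p))
  | push_main (num z : ℤ) (p : Proc) :
      step4 (env num (stack (u10 z) p)) (env num (stack (sumS z) (stack (u11 z) p)))
  | pop_main (num y z : ℤ) (p : Proc) :
      step4 (env num (stack (retS y) (stack (u11 z) p))) (env num (stack (u12 y) p))
end R4

/-!
Both rewrite systems are deterministic, so a term has at most one normal form reachable from it.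
A call `sum(n)` with counter `c` runs, in either system, to the value `1 + ⋯ + n` with counter
`c + max n 0 + 1` (the counter is bumped once per recursive call), which is found by induction on
`n`; in R4 the induction is carried out on top of an arbitrary stack. Hence both reductions hold
exactly when `v` and `c'` are these values.
-/

namespace Relation

variable {α : Type*} {r : α → α → Prop}

theorem ReflTransGen.eq_of_normal {a b : α} (hab : ReflTransGen r a b) (ha : ∀ c, ¬ r a c) :
    a = b := by
  rcases hab.cases_head with rfl | ⟨c, hac, -⟩
  · rfl
  · exact absurd hac (ha c)

theorem ReflTransGen.normal_form_unique (hdet : ∀ a b c, r a b → r a c → b = c) {a b c : α}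
    (hab : ReflTransGen r a b) (hac : ReflTransGen r a c) (hb : ∀ d, ¬ r b d)
    (hc : ∀ d, ¬ r c d) : b = c := by
  obtain ⟨d, hbd, hcd⟩ := church_rosser
    (fun a b c hab hac => ⟨b, .refl, hdet a b c hab hac ▸ .refl⟩) hab hac
  rw [hbd.eq_of_normal hb, hcd.eq_of_normal hc]

end Relation

open Relation Finset

theorem sum_Icc_one_eq_add_sum_Icc_one {n : ℤ} (hn : 0 < n) :
    ∑ i ∈ Icc 1 n, i = n + ∑ i ∈ Icc 1 (n - 1), i := by
  rw [← insert_Icc_sub_one_right_eq_Icc (by omega : (1 : ℤ) ≤ n), sum_insert (by simp)]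

theorem sum_Icc_one_of_nonpos {n : ℤ} (hn : n ≤ 0) : ∑ i ∈ Icc 1 n, i = 0 :=
  sum_eq_zero fun i hi => by simp at hi; omega

namespace R3

open Term3

theorem ret_normal (y num : ℤ) (t : Term3) : ¬ step3 (ret y num) t := nofun

theorem step3_deterministic (a b c : Term3) (hab : step3 a b) (hac : step3 a c) : b = c := by
  induction hab generalizing c with
  | u6_cong x num z h ih =>
    cases hac with
    | u6_ret => exact absurd h (ret_normal _ _ _)
    | u6_cong _ _ _ h' => rw [ih _ h']
  | u11_cong num z h ih =>
    cases hac with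
    | u11_ret => exact absurd h (ret_normal _ _ _)
    | u11_cong _ _ h' => rw [ih _ h']
  | u6_ret =>
    cases hac with
    | u6_ret => rfl
    | u6_cong _ _ _ h' => exact absurd h' (ret_normal _ _ _)
  | u11_ret =>
    cases hac with
    | u11_ret => rfl
    | u11_cong _ _ h' => exact absurd h' (ret_normal _ _ _)
  | _ => cases hac <;> first | rfl | omega

theorem reflTransGen_u6 (x num z : ℤ) {t t' : Term3} (h : ReflTransGen step3 t t') :
    ReflTransGen step3 (u6 x num z t) (u6 x num z t') :=
  h.lift (u6 x num z) fun _ _ => step3.u6_cong x num z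

theorem sum_reduces (n c : ℤ) :
    ReflTransGen step3 (sum n c) (ret (∑ i ∈ Icc 1 n, i) (c + n.toNat + 1)) := by
  by_cases hn : n ≤ 0
  · rw [sum_Icc_one_of_nonpos hn, show c + n.toNat + 1 = c + 1 by omega]
    exact .head (.sum_init ..) (.head (.u1_step ..) (.head (.u2_then _ _ _ hn)
      (.head (.u3_step ..) (.head (.u4_step ..) (.single (.u9_step ..))))))
  · have call : ReflTransGen step3 (sum n c) (u6 n (c + 1) 0 (sum (n - 1) (c + 1))) :=
      .head (.sum_init ..) (.head (.u1_step ..) (.head (.u2_else _ _ _ hn)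
        (.single (.u5_step ..))))
    have recursion := reflTransGen_u6 n (c + 1) 0 (sum_reduces (n - 1) (c + 1))
    have finish : ReflTransGen step3
        (u6 n (c + 1) 0 (ret (∑ i ∈ Icc 1 (n - 1), i) (c + 1 + (n - 1).toNat + 1)))
        (ret (∑ i ∈ Icc 1 n, i) (c + n.toNat + 1)) := by
      rw [sum_Icc_one_eq_add_sum_Icc_one (n := n) (by omega),
        show c + 1 + (n - 1).toNat + 1 = c + n.toNat + 1 by omega]
      exact .head (.u6_ret ..) (.head (.u7_step ..) (.head (.u8_step ..)
        (.single (.u9_step ..))))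
    exact (call.trans recursion).trans finish
termination_by n.toNat

theorem sum_reduces_iff (n c v c' : ℤ) :
    ReflTransGen step3 (sum n c) (ret v c') ↔ v = ∑ i ∈ Icc 1 n, i ∧ c' = c + n.toNat + 1 := by
  constructor
  · intro h
    simpa using h.normal_form_unique step3_deterministic (sum_reduces n c)
      (ret_normal _ _) (ret_normal _ _)
  · rintro ⟨rfl, rfl⟩
    exact sum_reduces n c

end R3

namespace R4

open State Proc Env

theorem L_deterministic {a b c : State} (hab : L a b) (hac : L a c) : b = c := by
  cases hab <;> cases hac <;> first | rfl | omega

theorem step4_deterministic (a b c : Env) (hab : step4 a b) (hac : step4 a c) : b = c := by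
  cases hab with
  | lift _ _ h =>
    cases hac with
    | lift _ _ h' => rw [L_deterministic h h']
    | _ => cases h
  | _ => cases hac <;> first | rfl | (rename_i h; cases h)

theorem retS_bot_normal (y num : ℤ) (e : Env) : ¬ step4 (env num (stack (retS y) bot)) e := by
  rintro ⟨_, _, h⟩
  cases h

theorem sumS_reduces (n c : ℤ) (p : Proc) :
    ReflTransGen step4 (env c (stack (sumS n) p))
      (env (c + n.toNat + 1) (stack (retS (∑ i ∈ Icc 1 n, i)) p)) := by
  by_cases hn : n ≤ 0
  · rw [sum_Icc_one_of_nonpos hn, show c + n.toNat + 1 = c + 1 by omega]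
    exact .head (.lift _ _ (.sum_init _)) (.head (.incr ..)
      (.head (.lift _ _ (.u2_then _ _ hn)) (.head (.lift _ _ (.u3_step ..))
      (.head (.lift _ _ (.u4_step ..)) (.single (.lift _ _ (.u9_step ..)))))))
  · have call : ReflTransGen step4 (env c (stack (sumS n) p))
        (env (c + 1) (stack (sumS (n - 1)) (stack (u6 n 0) p))) :=
      .head (.lift _ _ (.sum_init _)) (.head (.incr ..)
        (.head (.lift _ _ (.u2_else _ _ hn)) (.single (.push ..))))
    have recursion := sumS_reduces (n - 1) (c + 1) (stack (u6 n 0) p)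
    have finish : ReflTransGen step4
        (env (c + 1 + (n - 1).toNat + 1)
          (stack (retS (∑ i ∈ Icc 1 (n - 1), i)) (stack (u6 n 0) p)))
        (env (c + n.toNat + 1) (stack (retS (∑ i ∈ Icc 1 n, i)) p)) := by
      rw [sum_Icc_one_eq_add_sum_Icc_one (n := n) (by omega),
        show c + 1 + (n - 1).toNat + 1 = c + n.toNat + 1 by omega]
      exact .head (.pop ..) (.head (.lift _ _ (.u7_step ..))
        (.head (.lift _ _ (.u8_step ..)) (.single (.lift _ _ (.u9_step ..)))))
    exact (call.trans recursion).trans finish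
termination_by n.toNat

theorem sumS_reduces_iff (n c v c' : ℤ) :
    ReflTransGen step4 (env c (stack (sumS n) bot)) (env c' (stack (retS v) bot)) ↔
      v = ∑ i ∈ Icc 1 n, i ∧ c' = c + n.toNat + 1 := by
  constructor
  · intro h
    simpa [and_comm] using h.normal_form_unique step4_deterministic (sumS_reduces n c bot)
      (retS_bot_normal _ _) (retS_bot_normal _ _)
  · rintro ⟨rfl, rfl⟩
    exact sumS_reduces n c bot

end R4

theorem stmt_16 (n c v c' : ℤ) :
    Relation.ReflTransGen R3.step3 (R3.Term3.sum n c) (R3.Term3.ret v c') ↔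
    Relation.ReflTransGen R4.step4
      (R4.Env.env c (R4.Proc.stack (R4.State.sumS n) R4.Proc.bot))
      (R4.Env.env c' (R4.Proc.stack (R4.State.retS v) R4.Proc.bot)) := by
  rw [R3.sum_reduces_iff, R4.sumS_reduces_iff]
end

section
/- Correspondence between big-step evaluation and calculation steps (Lemma 4 of the paper, for integer expressions): for every assignment σ : V → ℤ, every expression e : Expr V, and every integer n, Eval σ e n holds if and only if Relation.ReflTransGen gstep (subst σ e) (const n) holds. -/
inductive Expr (V : Type) : Type
  | const : ℤ → Expr V
  | var : V → Expr V
  | add : Expr V → Expr V → Expr V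
  | sub : Expr V → Expr V → Expr V

open Expr

inductive Eval {V : Type} (σ : V → ℤ) : Expr V → ℤ → Prop
  | const (n : ℤ) : Eval σ (const n) n
  | var (v : V) : Eval σ (var v) (σ v)
  | add {e₁ e₂ : Expr V} {n₁ n₂ : ℤ} :
      Eval σ e₁ n₁ → Eval σ e₂ n₂ → Eval σ (add e₁ e₂) (n₁ + n₂)
  | sub {e₁ e₂ : Expr V} {n₁ n₂ : ℤ} :
      Eval σ e₁ n₁ → Eval σ e₂ n₂ → Eval σ (sub e₁ e₂) (n₁ - n₂)

inductive BExpr (V : Type) : Type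
  | btrue : BExpr V
  | bfalse : BExpr V
  | eqE : Expr V → Expr V → BExpr V
  | ltE : Expr V → Expr V → BExpr V
  | notE : BExpr V → BExpr V
  | orE : BExpr V → BExpr V → BExpr V

open BExpr

inductive BEval {V : Type} (σ : V → ℤ) : BExpr V → Bool → Prop
  | btrue : BEval σ btrue true
  | bfalse : BEval σ bfalse false
  | eqE {e₁ e₂ : Expr V} {n₁ n₂ : ℤ} :
      Eval σ e₁ n₁ → Eval σ e₂ n₂ → BEval σ (eqE e₁ e₂) (decide (n₁ = n₂))
  | ltE {e₁ e₂ : Expr V} {n₁ n₂ : ℤ} :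
      Eval σ e₁ n₁ → Eval σ e₂ n₂ → BEval σ (ltE e₁ e₂) (decide (n₁ < n₂))
  | notE {φ : BExpr V} {b : Bool} : BEval σ φ b → BEval σ (notE φ) (!b)
  | orE {φ₁ φ₂ : BExpr V} {b₁ b₂ : Bool} :
      BEval σ φ₁ b₁ → BEval σ φ₂ b₂ → BEval σ (orE φ₁ φ₂) (b₁ || b₂)

def subst {V : Type} (σ : V → ℤ) : Expr V → Expr V
  | .const n => .const n
  | .var v => .const (σ v)
  | .add e₁ e₂ => .add (subst σ e₁) (subst σ e₂)
  | .sub e₁ e₂ => .sub (subst σ e₁) (subst σ e₂)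

inductive gstep {V : Type} : Expr V → Expr V → Prop
  | calc_add (m n : ℤ) : gstep (add (const m) (const n)) (const (m+n))
  | calc_sub (m n : ℤ) : gstep (sub (const m) (const n)) (const (m-n))
  | add_cong_left {e e' : Expr V} (u : Expr V) : gstep e e' → gstep (add e u) (add e' u)
  | add_cong_right {e e' : Expr V} (u : Expr V) : gstep e e' → gstep (add u e) (add u e')
  | sub_cong_left {e e' : Expr V} (u : Expr V) : gstep e e' → gstep (sub e u) (sub e' u)
  | sub_cong_right {e e' : Expr V} (u : Expr V) : gstep e e' → gstep (sub u e) (sub u e')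


/-! Forward, by induction on the evaluation: reduce the left operand to its value, then the right
one, then perform one calculation step. Backward, evaluation is preserved by expanding a
`gstep` (subject expansion), so `subst σ e` evaluates to `n`, and substitution does not change
the value of an expression. -/

open Relation

namespace gstep

variable {V : Type} {a a' : Expr V}

theorem reflTransGen_add_left (u : Expr V) (h : ReflTransGen gstep a a') :
    ReflTransGen gstep (add a u) (add a' u) :=
  h.lift (add · u) fun _ _ => add_cong_left u

theorem reflTransGen_add_right (u : Expr V) (h : ReflTransGen gstep a a') :
    ReflTransGen gstep (add u a) (add u a') :=
  h.lift (add u ·) fun _ _ => add_cong_right u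

theorem reflTransGen_sub_left (u : Expr V) (h : ReflTransGen gstep a a') :
    ReflTransGen gstep (sub a u) (sub a' u) :=
  h.lift (sub · u) fun _ _ => sub_cong_left u

theorem reflTransGen_sub_right (u : Expr V) (h : ReflTransGen gstep a a') :
    ReflTransGen gstep (sub u a) (sub u a') :=
  h.lift (sub u ·) fun _ _ => sub_cong_right u

end gstep

namespace Eval

variable {V : Type} {σ : V → ℤ}

theorem reflTransGen_subst {e : Expr V} {n : ℤ} (h : Eval σ e n) :
    ReflTransGen gstep (subst σ e) (.const n) := by
  induction h with
  | const m => exact .refl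
  | var v => exact .refl
  | add _ _ ih₁ ih₂ =>
    exact ((gstep.reflTransGen_add_left _ ih₁).trans
      (gstep.reflTransGen_add_right _ ih₂)).tail (gstep.calc_add _ _)
  | sub _ _ ih₁ ih₂ =>
    exact ((gstep.reflTransGen_sub_left _ ih₁).trans
      (gstep.reflTransGen_sub_right _ ih₂)).tail (gstep.calc_sub _ _)

theorem of_gstep {e e' : Expr V} {n : ℤ} (hstep : gstep e e') (h : Eval σ e' n) :
    Eval σ e n := by
  induction hstep generalizing n with
  | calc_add m k => cases h; exact .add (.const m) (.const k)
  | calc_sub m k => cases h; exact .sub (.const m) (.const k)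
  | add_cong_left _ _ ih => cases h with | add h₁ h₂ => exact .add (ih h₁) h₂
  | add_cong_right _ _ ih => cases h with | add h₁ h₂ => exact .add h₁ (ih h₂)
  | sub_cong_left _ _ ih => cases h with | sub h₁ h₂ => exact .sub (ih h₁) h₂
  | sub_cong_right _ _ ih => cases h with | sub h₁ h₂ => exact .sub h₁ (ih h₂)

theorem of_reflTransGen_gstep {e : Expr V} {n : ℤ} (h : ReflTransGen gstep e (.const n)) :
    Eval σ e n := by
  induction h using ReflTransGen.head_induction_on with
  | refl => exact .const n
  | head hstep _ ih => exact of_gstep hstep ih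

theorem of_subst {e : Expr V} {n : ℤ} (h : Eval σ (subst σ e) n) : Eval σ e n := by
  induction e generalizing n with
  | const m => exact h
  | var v => cases h; exact .var v
  | add e₁ e₂ ih₁ ih₂ => cases h with | add h₁ h₂ => exact .add (ih₁ h₁) (ih₂ h₂)
  | sub e₁ e₂ ih₁ ih₂ => cases h with | sub h₁ h₂ => exact .sub (ih₁ h₁) (ih₂ h₂)

end Eval

theorem stmt_17 {V : Type} (σ : V → ℤ) (e : Expr V) (n : ℤ) :
    Eval σ e n ↔ Relation.ReflTransGen gstep (subst σ e) (const n) :=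
  ⟨Eval.reflTransGen_subst, fun h => Eval.of_subst (Eval.of_reflTransGen_gstep h)⟩
end
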